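/- arXiv:0903.3388 — 2 statements merged into one kernel-verified Lean document; each statement's English description precedes it below -/
import Mathlib

section
/- If $\A_e$ is commutative for every idempotent $e$ of an inverse semigroup $S$, then for all idempotents $e,f$ and all $a\in\A_e$, $b\in\A_f$ one has $ab=ba$. -/
/-- An inverse semigroup: a semigroup with an involution `star` such that `s (star s) s = s`,
`(star s) s (star s) = star s`, and idempotents commute (this forces `star s` to be the
unique generalized inverse of `s`). -/
class InverseSemigroup (S : Type*) extends Semigroup S, Star S where
  mul_star_mul : ∀ s : S, s * star s * s = s
  star_mul_star : ∀ s : S, star s * s * star s = star s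
  idem_comm : ∀ e f : S, e * e = e → f * f = f → e * f = f * e

/-- The natural partial order on an inverse semigroup: `s ≤ t` iff `s = t (star s) s`. -/
def ISle {S : Type*} [InverseSemigroup S] (s t : S) : Prop := t * (star s * s) = s

/-- A (concrete) Fell bundle over an inverse semigroup `S`: a family of closed subspaces
`fib s` of a C*-algebra `A`, with `fib s * fib t ⊆ fib (s t)`, `(fib s)* ⊆ fib (star s)`,
and `fib s ⊆ fib t` whenever `s ≤ t`.  (The fibers are thus Banach spaces with a
bilinear associative multiplication `𝒜ₛ × 𝒜ₜ → 𝒜ₛₜ`, a conjugate-linear involution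
`𝒜ₛ → 𝒜ₛ*`, isometric inclusions, and the C*-identities hold in `A`.) -/
structure FellBundle (S : Type*) [InverseSemigroup S] (A : Type*)
    [NormedRing A] [StarRing A] [NormedAlgebra ℂ A] where
  fib : S → Submodule ℂ A
  isClosed_fib : ∀ s, IsClosed (fib s : Set A)
  mul_mem : ∀ {s t : S} {a b : A}, a ∈ fib s → b ∈ fib t → a * b ∈ fib (s * t)
  star_mem : ∀ {s : S} {a : A}, a ∈ fib s → star a ∈ fib (star s)
  incl : ∀ {s t : S}, ISle s t → fib s ≤ fib t

variable {S : Type*} [InverseSemigroup S]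
variable {A : Type*} [NormedRing A] [StarRing A] [CStarRing A]
  [NormedAlgebra ℂ A] [StarModule ℂ A] [CompleteSpace A]

/-- A Fell bundle is semi-abelian if each fiber over an idempotent is commutative. -/
def FellBundle.SemiAbelian (𝓑 : FellBundle S A) : Prop :=
  ∀ e : S, e * e = e → ∀ a b : A, a ∈ 𝓑.fib e → b ∈ 𝓑.fib e → a * b = b * a

/-- A Fell bundle is saturated if `fib (s t)` is the closed linear span of
`fib s * fib t`. -/
def FellBundle.Saturated (𝓑 : FellBundle S A) : Prop :=
  ∀ s t : S, (𝓑.fib (s * t) : Set A) ⊆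
    closure (↑(Submodule.span ℂ {x : A | ∃ a ∈ 𝓑.fib s, ∃ b ∈ 𝓑.fib t, x = a * b}) : Set A)

/-- The "restriction to the idempotent semilattice" part of the bundle: the closed linear
span of the fibers over idempotents, a concrete model for `C*(𝓔)`. -/
def FellBundle.EPart (𝓑 : FellBundle S A) : Set A :=
  closure (↑(Submodule.span ℂ (⋃ e ∈ {e : S | e * e = e}, (𝓑.fib e : Set A))) : Set A)

/-- The open support `𝒰ₑ ⊆ X` of the ideal `𝒜ₑ = C₀(𝒰ₑ)`, expressed via the Gelfand
transform `val` of the idempotent part. -/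
def FellBundle.U (𝓑 : FellBundle S A) {X : Type*} (val : A → X → ℂ) (e : S) : Set X :=
  {x : X | ∃ b ∈ 𝓑.fib e, val b x ≠ 0}

/-! Let `a ∈ 𝒜ₑ`, `b ∈ 𝒜_f`. Since `ef ≤ e`, both `x b` and `b x` lie in `𝒜_{ef} ⊆ 𝒜ₑ` for every
`x ∈ 𝒜ₑ`, so commutativity of `𝒜ₑ` gives `x² b = x (x b) = x b x = (b x) x = b x²`. In the
C*-algebra `𝒜ₑ` every element is a linear combination of positive elements, each of which is
the square of its square root; hence `b` commutes with all of `𝒜ₑ`. -/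

open scoped ComplexStarModule

namespace InverseSemigroup

theorem star_eq_self_of_mul_self {e : S} (he : e * e = e) : star e = e := by
  set x := star e
  have hex_idem : (e * x) * (e * x) = e * x := by
    rw [mul_assoc, ← mul_assoc x, star_mul_star]
  have hxe_idem : (x * e) * (x * e) = x * e := by
    rw [mul_assoc, ← mul_assoc e, mul_star_mul]
  have hex_eq : e * x = e :=
    calc e * x = e * (e * x) := by rw [← mul_assoc, he]
      _ = e * x * e := idem_comm e (e * x) he hex_idem
      _ = e := mul_star_mul e
  have hxe_eq : x * e = e :=
    calc x * e = x * e * e := by rw [mul_assoc, he]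
      _ = e * (x * e) := (idem_comm e (x * e) he hxe_idem).symm
      _ = e := by rw [← mul_assoc]; exact mul_star_mul e
  calc x = x * e * x := (star_mul_star e).symm
    _ = e := by rw [hxe_eq, hex_eq]

theorem mul_mul_self_of_mul_self {e f : S} (he : e * e = e) (hf : f * f = f) :
    (e * f) * (e * f) = e * f := by
  rw [mul_assoc, ← mul_assoc f, ← idem_comm e f he hf, mul_assoc, hf, ← mul_assoc, he]

theorem isle_mul_right_of_mul_self {e f : S} (he : e * e = e) (hf : f * f = f) :
    ISle (e * f) e := by
  have hef := mul_mul_self_of_mul_self he hf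
  rw [ISle, star_eq_self_of_mul_self hef, hef, ← mul_assoc, he]

end InverseSemigroup

namespace NonUnitalStarSubalgebra

variable {B : Type*} [NonUnitalCStarAlgebra B]

theorem realPart_mem (N : NonUnitalStarSubalgebra ℂ B) {x : B} (hx : x ∈ N) :
    (ℜ x : B) ∈ N := by
  rw [realPart_apply_coe, ← Complex.coe_smul]
  exact SMulMemClass.smul_mem _ (add_mem hx (star_mem hx))

theorem imaginaryPart_mem (N : NonUnitalStarSubalgebra ℂ B) {x : B} (hx : x ∈ N) :
    (ℑ x : B) ∈ N := by
  rw [imaginaryPart_apply_coe, ← Complex.coe_smul]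
  exact SMulMemClass.smul_mem _ (SMulMemClass.smul_mem _ (sub_mem hx (star_mem hx)))

theorem commute_of_forall_commute_mul_self (N : NonUnitalStarSubalgebra ℂ B)
    [IsClosed (N : Set B)] {b : B} (hb : ∀ y ∈ N, Commute (y * y) b) {x : B} (hx : x ∈ N) :
    Commute x b := by
  let _ := CStarAlgebra.spectralOrder B
  have := CStarAlgebra.spectralOrderedRing B
  have of_nonneg : ∀ p ∈ N, 0 ≤ p → Commute p b := fun p hp hp0 => by
    rw [← CFC.sqrt_mul_sqrt_self p hp0]
    exact hb _ (by rw [CFC.sqrt_eq_real_sqrt p hp0]; exact cfcₙ_mem _ hp)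
  have of_isSelfAdjoint : ∀ y ∈ N, IsSelfAdjoint y → Commute y b := fun y hy hsa => by
    rw [← CFC.posPart_sub_negPart y hsa]
    exact (of_nonneg _ (cfcₙ_mem _ hy) (CFC.posPart_nonneg y)).sub_left
      (of_nonneg _ (cfcₙ_mem _ hy) (CFC.negPart_nonneg y))
  rw [← realPart_add_I_smul_imaginaryPart x]
  exact (of_isSelfAdjoint _ (N.realPart_mem hx) (ℜ x).2).add_left
    ((of_isSelfAdjoint _ (N.imaginaryPart_mem hx) (ℑ x).2).smul_left _)

end NonUnitalStarSubalgebra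

namespace FellBundle

variable {B : Type*} [NormedRing B] [StarRing B] [NormedAlgebra ℂ B] (𝓑 : FellBundle S B)

def idemFiber {e : S} (he : e * e = e) : NonUnitalStarSubalgebra ℂ B where
  toSubmodule := 𝓑.fib e
  mul_mem' hx hy := he ▸ 𝓑.mul_mem hx hy
  star_mem' hx := InverseSemigroup.star_eq_self_of_mul_self he ▸ 𝓑.star_mem hx

theorem isClosed_idemFiber {e : S} (he : e * e = e) : IsClosed (𝓑.idemFiber he : Set B) :=
  𝓑.isClosed_fib e

theorem commute_mul_self_of_mem_fib {e f : S} (he : e * e = e) (hf : f * f = f)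
    (hcomm : ∀ x y : B, x ∈ 𝓑.fib e → y ∈ 𝓑.fib e → x * y = y * x)
    {x b : B} (hx : x ∈ 𝓑.fib e) (hb : b ∈ 𝓑.fib f) : Commute (x * x) b := by
  have hle := 𝓑.incl (InverseSemigroup.isle_mul_right_of_mul_self he hf)
  have hxb : x * b ∈ 𝓑.fib e := hle (𝓑.mul_mem hx hb)
  have hbx : b * x ∈ 𝓑.fib e :=
    hle (InverseSemigroup.idem_comm e f he hf ▸ 𝓑.mul_mem hb hx)
  calc x * x * b = x * b * x := by rw [mul_assoc, hcomm x _ hx hxb]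
    _ = b * x * x := by rw [mul_assoc, hcomm x _ hx hbx]
    _ = b * (x * x) := mul_assoc _ _ _

end FellBundle

/-- If the fiber `𝒜ₑ` is commutative for every idempotent `e` of the
inverse semigroup `S`, then for all idempotents `e, f` and all `a ∈ 𝒜ₑ`, `b ∈ 𝒜_f` one
has `a b = b a`. -/
theorem stmt_6 (𝓑 : FellBundle S A)
    (h : ∀ e : S, e * e = e → ∀ a b : A, a ∈ 𝓑.fib e → b ∈ 𝓑.fib e → a * b = b * a)
    {e f : S} (he : e * e = e) (hf : f * f = f) {a b : A}
    (ha : a ∈ 𝓑.fib e) (hb : b ∈ 𝓑.fib f) :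
    a * b = b * a := by
  let _ : NonUnitalCStarAlgebra A := {}
  have := 𝓑.isClosed_idemFiber he
  exact (𝓑.idemFiber he).commute_of_forall_commute_mul_self
    (fun x hx => 𝓑.commute_mul_self_of_mem_fib he hf (h e he) hx hb) ha
end

section
/- Let $\A$ be a saturated semi-abelian Fell bundle over $S$ with spectrum $X$ of $C^*(\E)$ and $\A_e\cong C_0(\U_e)$ for idempotents $e$. Then for each $s\in S$ there is a unique homeomorphism $\theta_s\colon\U_{s^*s}\to\U_{ss^*}$ whose restriction to $\mathrm{dom}(a)$ equals $\theta_a$ for each $a\in\A_s$, and $s\mapsto\theta_s$ satisfies $\theta_s\circ\theta_t=\theta_{st}$; i.e., $\theta$ is an action of $S$ on $X$ by partial homeomorphisms. -/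
variable {S : Type*} [InverseSemigroup S]
variable {A : Type*} [NormedRing A] [StarRing A] [CStarRing A]
  [NormedAlgebra ℂ A] [StarModule ℂ A] [CompleteSpace A]

/-!
For `a ∈ 𝒜ₛ` write `dom a = {x | (a*a)(x) > 0}`. The maps `θₐ`, `a ∈ 𝒜ₛ`, agree on common
domains: `(a₂*a₂)(a₁* b a₁) = (a₂* b a₂)(a₁*a₁)` because elements of fibres over idempotents
commute, so `b(θ_{a₁} x) = b(θ_{a₂} x)` for every `b`, and these functions separate points.
The domains cover `𝒰_{s*s}`: if `(a*a)(x) = 0` for all `a ∈ 𝒜ₛ`, then for `c ∈ 𝒜_{s*}`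
`|(ca)(x)|² = (a* c*c a)(x) ≤ ‖c*c‖ (a*a)(x) = 0`, and `𝒜_{s*} 𝒜ₛ` spans a dense subspace of
`𝒜_{s*s}` by saturation. Hence the `θₐ` glue to a partial homeomorphism
`θₛ : 𝒰_{s*s} → 𝒰_{ss*}`, which is then unique. From `(ab)*(ab) = b*(a*a)b` one gets
`dom (ab) = dom b ∩ θ_b⁻¹(dom a)` and `θ_{ab} = θ_a ∘ θ_b` there; as the products `ab` again
cover `𝒰_{(st)*(st)}`, `θₛ ∘ θₜ = θ_{st}`.
-/

namespace InverseSemigroup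

theorem isIdempotentElem_mul_of_mul_mul {u v : S} (h : u * v * u = u) :
    IsIdempotentElem (u * v) := by
  rw [IsIdempotentElem, ← mul_assoc, h]

theorem isIdempotentElem_mul_of_mul_mul' {u v : S} (h : u * v * u = u) :
    IsIdempotentElem (v * u) := by
  rw [IsIdempotentElem, mul_assoc, ← mul_assoc u, h]

theorem genInverse_unique {t x y : S} (hx₁ : t * x * t = t) (hx₂ : x * t * x = x)
    (hy₁ : t * y * t = t) (hy₂ : y * t * y = y) : x = y := by
  have hx : x = x * t * y := by
    calc x = x * (t * y * t) * x := by rw [hy₁, hx₂]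
      _ = x * ((t * y) * (t * x)) := by simp only [mul_assoc]
      _ = x * ((t * x) * (t * y)) := by
        rw [idem_comm _ _ (isIdempotentElem_mul_of_mul_mul hy₁)
          (isIdempotentElem_mul_of_mul_mul hx₁)]
      _ = (x * t * x) * (t * y) := by simp only [mul_assoc]
      _ = x * t * y := by rw [hx₂, mul_assoc]
  have hy : y = x * t * y := by
    calc y = y * (t * x * t) * y := by rw [hx₁, hy₂]
      _ = ((y * t) * (x * t)) * y := by simp only [mul_assoc]
      _ = ((x * t) * (y * t)) * y := by
        rw [idem_comm _ _ (isIdempotentElem_mul_of_mul_mul' hy₁)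
          (isIdempotentElem_mul_of_mul_mul' hx₁)]
      _ = x * t * (y * t * y) := by simp only [mul_assoc]
      _ = x * t * y := by rw [hy₂]
  rw [hx, ← hy]

theorem isIdempotentElem_star_mul_self (s : S) : IsIdempotentElem (star s * s) :=
  isIdempotentElem_mul_of_mul_mul (star_mul_star s)

theorem isIdempotentElem_mul_star_self (s : S) : IsIdempotentElem (s * star s) :=
  isIdempotentElem_mul_of_mul_mul (mul_star_mul s)

instance instStarMul : StarMul S where
  star := star
  star_involutive s := (genInverse_unique (star_mul_star s) (mul_star_mul s)
    (mul_star_mul (star s)) (star_mul_star (star s))).symm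
  star_mul s t := by
    refine genInverse_unique (mul_star_mul (s * t)) (star_mul_star (s * t)) ?_ ?_
    · calc s * t * (star t * star s) * (s * t)
          = s * ((t * star t) * (star s * s)) * t := by simp only [mul_assoc]
        _ = (s * star s * s) * (t * star t * t) := by
          rw [idem_comm _ _ (isIdempotentElem_mul_star_self t)
            (isIdempotentElem_star_mul_self s)]
          simp only [mul_assoc]
        _ = s * t := by rw [mul_star_mul, mul_star_mul]
    · calc star t * star s * (s * t) * (star t * star s)
          = star t * ((star s * s) * (t * star t)) * star s := by simp only [mul_assoc]
        _ = (star t * t * star t) * (star s * s * star s) := by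
          rw [idem_comm _ _ (isIdempotentElem_star_mul_self s)
            (isIdempotentElem_mul_star_self t)]
          simp only [mul_assoc]
        _ = star t * star s := by rw [star_mul_star, star_mul_star]

variable {e : S}

theorem star_eq_of_isIdempotentElem (he : IsIdempotentElem e) : star e = e :=
  genInverse_unique (mul_star_mul e) (star_mul_star e)
    (by rw [he.eq, he.eq]) (by rw [he.eq, he.eq])

theorem isIdempotentElem_mul {f : S} (he : IsIdempotentElem e) (hf : IsIdempotentElem f) :
    IsIdempotentElem (e * f) :=
  he.mul_of_commute (idem_comm e f he hf) hf

theorem isIdempotentElem_star_mul_mul (he : IsIdempotentElem e) (s : S) :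
    IsIdempotentElem (star s * e * s) := by
  calc star s * e * s * (star s * e * s)
      = star s * (((s * star s) * e) * (e * s)) := by
        rw [← idem_comm _ _ he (isIdempotentElem_mul_star_self s)]; simp only [mul_assoc]
    _ = (star s * s * star s) * ((e * e) * s) := by simp only [mul_assoc]
    _ = star s * e * s := by rw [star_mul_star, he.eq, mul_assoc]

theorem isle_mul_left (he : IsIdempotentElem e) (t : S) : ISle (e * t) t := by
  rw [ISle, star_mul, star_eq_of_isIdempotentElem he]
  calc t * (star t * e * (e * t)) = ((t * star t) * e) * t := by
        simp only [mul_assoc, ← mul_assoc e e, he.eq]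
    _ = e * (t * star t * t) := by
        rw [← idem_comm e _ he (isIdempotentElem_mul_star_self t)]; simp only [mul_assoc]
    _ = e * t := by rw [mul_star_mul]

end InverseSemigroup

open Filter Topology in
theorem eq_zero_of_mem_closure_span {E : Type*} [SeminormedAddCommGroup E] [NormedSpace ℂ E]
    {V : Submodule ℂ E} (hV : IsClosed (V : Set E)) {φ : E → ℂ}
    (hadd : ∀ a ∈ V, ∀ b ∈ V, φ (a + b) = φ a + φ b)
    (hsmul : ∀ (c : ℂ), ∀ a ∈ V, φ (c • a) = c * φ a)
    {C : ℝ} (hbound : ∀ a ∈ V, ‖φ a‖ ≤ C * ‖a‖) {T : Set E} (hT : T ⊆ V)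
    (hφT : ∀ y ∈ T, φ y = 0) {b : E} (hb : b ∈ closure (Submodule.span ℂ T : Set E)) :
    φ b = 0 := by
  have hspan : Submodule.span ℂ T ≤ V := Submodule.span_le.2 hT
  have hspan_zero : ∀ y ∈ Submodule.span ℂ T, φ y = 0 := by
    intro y hy
    induction hy using Submodule.span_induction with
    | mem y hy => exact hφT y hy
    | zero => simpa using hsmul 0 0 V.zero_mem
    | add u w hu hw ihu ihw => rw [hadd u (hspan hu) w (hspan hw), ihu, ihw, add_zero]
    | smul c u hu ih => rw [hsmul c u (hspan hu), ih, mul_zero]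
  have hbV : b ∈ V := closure_minimal hspan hV hb
  obtain ⟨y, hyT, hy⟩ := mem_closure_iff_seq_limit.1 hb
  have hle : ∀ n, ‖φ b‖ ≤ C * ‖y n - b‖ := fun n => by
    have hyV : y n ∈ V := hspan (hyT n)
    have h := hadd (b - y n) (V.sub_mem hbV hyV) (y n) hyV
    rw [sub_add_cancel, hspan_zero _ (hyT n), add_zero] at h
    rw [h, norm_sub_rev]
    exact hbound _ (V.sub_mem hbV hyV)
  have hlim : Tendsto (fun n => C * ‖y n - b‖) atTop (𝓝 0) := by
    simpa using (tendsto_iff_norm_sub_tendsto_zero.1 hy).const_mul C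
  exact norm_eq_zero.1 (le_antisymm (ge_of_tendsto' hlim hle) (norm_nonneg _))

theorem NonUnitalStarSubalgebra.exists_eq_star_mul_self_of_nonneg {B : Type*} [CStarAlgebra B]
    [PartialOrder B] [StarOrderedRing B] {s : NonUnitalStarSubalgebra ℂ B}
    (hs : IsClosed (s : Set B)) {y : B} (hy : 0 ≤ y) (hys : y ∈ s) :
    ∃ w ∈ s, y = star w * w := by
  refine ⟨CFC.sqrt y, ?_, ?_⟩
  · rw [CFC.sqrt_eq_real_sqrt y hy]
    exact cfcₙ_mem (𝕜' := ℂ) (hs := hs) Real.sqrt hys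
  · rw [(CFC.sqrt_nonneg y).isSelfAdjoint.star_eq, CFC.sqrt_mul_sqrt_self y hy]

theorem star_mul_self_mul {R : Type*} [Semigroup R] [StarMul R] (a b : R) :
    star (a * b) * (a * b) = star b * (star a * a) * b := by
  rw [star_mul]; simp only [mul_assoc]

namespace FellBundle

def dom {B X : Type*} [Mul B] [Star B] (val : B → X → ℂ) (a : B) : Set X :=
  {x | 0 < (val (star a * a) x).re}

theorem val_star_mul_self_ne_zero {B X : Type*} [Mul B] [Star B] {val : B → X → ℂ} {a : B}
    {x : X} (hx : x ∈ dom val a) : val (star a * a) x ≠ 0 := fun h => by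
  simp [dom, h] at hx

open InverseSemigroup

section Fibers

variable {B : Type*} [NormedRing B] [StarRing B] [NormedAlgebra ℂ B] (𝓑 : FellBundle S B)
  {e s t : S} {a b : B}

theorem star_mem_of_isIdempotentElem (he : IsIdempotentElem e) (ha : a ∈ 𝓑.fib e) :
    star a ∈ 𝓑.fib e := by
  simpa only [star_eq_of_isIdempotentElem he] using 𝓑.star_mem ha

theorem mul_mem_of_isIdempotentElem (he : IsIdempotentElem e) (ha : a ∈ 𝓑.fib e)
    (hb : b ∈ 𝓑.fib e) : a * b ∈ 𝓑.fib e := by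
  simpa only [he.eq] using 𝓑.mul_mem ha hb

theorem star_mul_self_mem (ha : a ∈ 𝓑.fib s) : star a * a ∈ 𝓑.fib (star s * s) :=
  𝓑.mul_mem (𝓑.star_mem ha) ha

theorem star_mul_mul_mem (ha : a ∈ 𝓑.fib s) (hb : b ∈ 𝓑.fib e) :
    star a * b * a ∈ 𝓑.fib (star s * e * s) :=
  𝓑.mul_mem (𝓑.mul_mem (𝓑.star_mem ha) hb) ha

theorem mul_mem_of_isIdempotentElem_left (he : IsIdempotentElem e) (ha : a ∈ 𝓑.fib e)
    (hb : b ∈ 𝓑.fib t) : a * b ∈ 𝓑.fib t :=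
  𝓑.incl (isle_mul_left he t) (𝓑.mul_mem ha hb)

def fibSubalgebra (he : IsIdempotentElem e) : NonUnitalStarSubalgebra ℂ B where
  carrier := 𝓑.fib e
  add_mem' := add_mem
  zero_mem' := zero_mem _
  mul_mem' := 𝓑.mul_mem_of_isIdempotentElem he
  smul_mem' c _ ha := Submodule.smul_mem _ c ha
  star_mem' := 𝓑.star_mem_of_isIdempotentElem he

variable {X : Type*}

theorem mem_U_of_mem_dom {val : B → X → ℂ} (ha : a ∈ 𝓑.fib s) {x : X} (hx : x ∈ dom val a) :
    x ∈ 𝓑.U val (star s * s) :=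
  ⟨_, 𝓑.star_mul_self_mem ha, val_star_mul_self_ne_zero hx⟩

variable [TopologicalSpace X]

structure IsGelfandTransform (val : B → X → ℂ) : Prop where
  map_add : ∀ {e : S} {a b : B}, IsIdempotentElem e → a ∈ 𝓑.fib e → b ∈ 𝓑.fib e →
    ∀ x, val (a + b) x = val a x + val b x
  map_smul : ∀ {e : S} {a : B} (c : ℂ), IsIdempotentElem e → a ∈ 𝓑.fib e →
    ∀ x, val (c • a) x = c * val a x
  map_mul : ∀ {e f : S} {a b : B}, IsIdempotentElem e → IsIdempotentElem f → a ∈ 𝓑.fib e →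
    b ∈ 𝓑.fib f → ∀ x, val (a * b) x = val a x * val b x
  map_star : ∀ {e : S} {a : B}, IsIdempotentElem e → a ∈ 𝓑.fib e →
    ∀ x, val (star a) x = (starRingEnd ℂ) (val a x)
  injOn : ∀ {e : S} {a b : B}, IsIdempotentElem e → a ∈ 𝓑.fib e → b ∈ 𝓑.fib e →
    (∀ x, val a x = val b x) → a = b
  separates : ∀ x y : X,
    (∀ (e : S) (b : B), IsIdempotentElem e → b ∈ 𝓑.fib e → val b x = val b y) → x = y
  star_mul_self : ∀ {s : S} {a : B}, a ∈ 𝓑.fib s →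
    ∀ x, (val (star a * a) x).im = 0 ∧ 0 ≤ (val (star a * a) x).re
  continuous : ∀ {e : S} {b : B}, IsIdempotentElem e → b ∈ 𝓑.fib e → Continuous (val b)

/-- The maps `θₐ` of Lemma 3.3, each a homeomorphism of `dom a` onto `dom a*`. -/
structure IsConjugationFamily (val : B → X → ℂ) (θa : B → X → X) : Prop where
  val_conj : ∀ {s : S} {a : B}, a ∈ 𝓑.fib s → ∀ x : X, x ∈ dom val a →
    ∀ {e : S} {b : B}, IsIdempotentElem e → b ∈ 𝓑.fib e →
      val (star a * b * a) x = val (star a * a) x * val b (θa a x)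
  continuousOn : ∀ {s : S} {a : B}, a ∈ 𝓑.fib s → ContinuousOn (θa a) (dom val a)
  inv : ∀ {s : S} {a : B}, a ∈ 𝓑.fib s → ∀ x : X, x ∈ dom val a →
    0 < (val (a * star a) (θa a x)).re ∧ θa (star a) (θa a x) = x

namespace IsGelfandTransform

variable {𝓑} {val : B → X → ℂ}

theorem val_star_mul_self_eq_re (hv : 𝓑.IsGelfandTransform val) (ha : a ∈ 𝓑.fib s) (x : X) :
    val (star a * a) x = ((val (star a * a) x).re : ℂ) :=
  Complex.ext rfl (by simp [(hv.star_mul_self ha x).1])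

theorem val_star_mul_self_of_isIdempotentElem (hv : 𝓑.IsGelfandTransform val)
    (he : IsIdempotentElem e) (ha : a ∈ 𝓑.fib e) (x : X) :
    val (star a * a) x = ((‖val a x‖ ^ 2 : ℝ) : ℂ) := by
  rw [hv.map_mul he he (𝓑.star_mem_of_isIdempotentElem he ha) ha x, hv.map_star he ha x,
    Complex.conj_mul']
  norm_cast

theorem re_val_star_mul_self_eq_zero (hv : 𝓑.IsGelfandTransform val) (ha : a ∈ 𝓑.fib s)
    {x : X} (hx : x ∉ dom val a) : (val (star a * a) x).re = 0 :=
  le_antisymm (not_lt.1 hx) (hv.star_mul_self ha x).2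

theorem commute_of_isIdempotentElem (hv : 𝓑.IsGelfandTransform val) {f : S}
    (he : IsIdempotentElem e) (hf : IsIdempotentElem f) (ha : a ∈ 𝓑.fib e)
    (hb : b ∈ 𝓑.fib f) : a * b = b * a := by
  have hba : b * a ∈ 𝓑.fib (e * f) := by
    rw [idem_comm e f he hf]; exact 𝓑.mul_mem hb ha
  refine hv.injOn (isIdempotentElem_mul he hf) (𝓑.mul_mem ha hb) hba fun x => ?_
  rw [hv.map_mul he hf ha hb x, hv.map_mul hf he hb ha x, mul_comm]

theorem isOpen_dom (hv : 𝓑.IsGelfandTransform val) (ha : a ∈ 𝓑.fib s) :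
    IsOpen (dom val a) :=
  isOpen_lt continuous_const <| Complex.continuous_re.comp <|
    hv.continuous (isIdempotentElem_star_mul_self s) (𝓑.star_mul_self_mem ha)

theorem val_star_mul_self_mul (hv : 𝓑.IsGelfandTransform val) {θa : B → X → X}
    (hθ : 𝓑.IsConjugationFamily val θa) (ha : a ∈ 𝓑.fib s) (hb : b ∈ 𝓑.fib t) {x : X}
    (hx : x ∈ dom val b) :
    (val (star (a * b) * (a * b)) x).re =
      (val (star b * b) x).re * (val (star a * a) (θa b x)).re := by
  have h := hθ.val_conj hb x hx (isIdempotentElem_star_mul_self s) (𝓑.star_mul_self_mem ha)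
  rw [hv.val_star_mul_self_eq_re hb, hv.val_star_mul_self_eq_re ha] at h
  rw [star_mul_self_mul, h, ← Complex.ofReal_mul, Complex.ofReal_re]

theorem isOpen_U (hv : 𝓑.IsGelfandTransform val) (he : IsIdempotentElem e) :
    IsOpen (𝓑.U val e) :=
  isOpen_iff_forall_mem_open.2 fun _ ⟨b, hb, hx⟩ => ⟨{y | val b y ≠ 0}, fun _ hy => ⟨b, hb, hy⟩,
    isOpen_ne_fun (hv.continuous he hb) continuous_const, hx⟩

end IsGelfandTransform

namespace IsConjugationFamily

variable {𝓑} {val : B → X → ℂ} {θa : B → X → X}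

theorem apply_eq_apply (hθ : 𝓑.IsConjugationFamily val θa) (hv : 𝓑.IsGelfandTransform val)
    {a₁ a₂ : B} (ha₁ : a₁ ∈ 𝓑.fib s) (ha₂ : a₂ ∈ 𝓑.fib s) {x : X} (hx₁ : x ∈ dom val a₁)
    (hx₂ : x ∈ dom val a₂) : θa a₁ x = θa a₂ x := by
  refine hv.separates _ _ fun f c hf hc => ?_
  have hs := isIdempotentElem_star_mul_self s
  have hsf := isIdempotentElem_star_mul_mul hf s
  have hcomm : a₂ * star a₁ * c = c * (a₂ * star a₁) :=
    hv.commute_of_isIdempotentElem (isIdempotentElem_mul_star_self s) hf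
      (𝓑.mul_mem ha₂ (𝓑.star_mem ha₁)) hc
  have hswap : star a₂ * a₂ * (star a₁ * c * a₁) = star a₂ * c * a₂ * (star a₁ * a₁) := by
    calc star a₂ * a₂ * (star a₁ * c * a₁) = star a₂ * (a₂ * star a₁ * c) * a₁ := by
          simp only [mul_assoc]
      _ = star a₂ * c * a₂ * (star a₁ * a₁) := by rw [hcomm]; simp only [mul_assoc]
  have key := congrArg (val · x) hswap
  rw [hv.map_mul hs hsf (𝓑.star_mul_self_mem ha₂) (𝓑.star_mul_mul_mem ha₁ hc),
    hv.map_mul hsf hs (𝓑.star_mul_mul_mem ha₂ hc) (𝓑.star_mul_self_mem ha₁),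
    hθ.val_conj ha₁ x hx₁ hf hc, hθ.val_conj ha₂ x hx₂ hf hc] at key
  refine mul_left_cancel₀ (mul_ne_zero (val_star_mul_self_ne_zero hx₁)
    (val_star_mul_self_ne_zero hx₂)) ?_
  linear_combination key

theorem mem_dom_star (hθ : 𝓑.IsConjugationFamily val θa) (ha : a ∈ 𝓑.fib s) {x : X}
    (hx : x ∈ dom val a) : θa a x ∈ dom val (star a) := by
  rw [dom, Set.mem_ofPred_eq, star_star]
  exact (hθ.inv ha x hx).1

theorem mem_dom_mul (hθ : 𝓑.IsConjugationFamily val θa) (hv : 𝓑.IsGelfandTransform val)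
    (ha : a ∈ 𝓑.fib s) (hb : b ∈ 𝓑.fib t) {x : X} (hxb : x ∈ dom val b)
    (hya : θa b x ∈ dom val a) : x ∈ dom val (a * b) := by
  rw [dom, Set.mem_ofPred_eq, hv.val_star_mul_self_mul hθ ha hb hxb]
  exact mul_pos hxb hya

theorem apply_mul (hθ : 𝓑.IsConjugationFamily val θa) (hv : 𝓑.IsGelfandTransform val)
    (ha : a ∈ 𝓑.fib s) (hb : b ∈ 𝓑.fib t) {x : X} (hxb : x ∈ dom val b)
    (hya : θa b x ∈ dom val a) : θa (a * b) x = θa a (θa b x) := by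
  have hxab := hθ.mem_dom_mul hv ha hb hxb hya
  refine hv.separates _ _ fun f c hf hc => mul_left_cancel₀ (val_star_mul_self_ne_zero hxab) ?_
  have hconj : ∀ d : B, star (a * b) * d * (a * b) = star b * (star a * d * a) * b := fun d => by
    rw [star_mul]; simp only [mul_assoc]
  have hδ := hθ.val_conj hb x hxb (isIdempotentElem_star_mul_self s) (𝓑.star_mul_self_mem ha)
  rw [← star_mul_self_mul] at hδ
  calc val (star (a * b) * (a * b)) x * val c (θa (a * b) x)
      = val (star b * (star a * c * a) * b) x := by
        rw [← hconj, hθ.val_conj (𝓑.mul_mem ha hb) x hxab hf hc]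
    _ = val (star b * b) x * val (star a * a) (θa b x) * val c (θa a (θa b x)) := by
        rw [hθ.val_conj hb x hxb (isIdempotentElem_star_mul_mul hf s) (𝓑.star_mul_mul_mem ha hc),
          hθ.val_conj ha _ hya hf hc, mul_assoc]
    _ = val (star (a * b) * (a * b)) x * val c (θa a (θa b x)) := by rw [hδ]

end IsConjugationFamily

open Classical in
/-- Glues the maps `θₐ`, `a ∈ 𝒜ₛ`; outside the union of their domains the value is a junk
default. -/
noncomputable def theta (val : B → X → ℂ) (θa : B → X → X) (s : S) (x : X) : X :=
  if h : ∃ a ∈ 𝓑.fib s, x ∈ dom val a then θa h.choose x else x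

variable {𝓑} in
theorem theta_eq {val : B → X → ℂ} {θa : B → X → X} (hθ : 𝓑.IsConjugationFamily val θa)
    (hv : 𝓑.IsGelfandTransform val) (ha : a ∈ 𝓑.fib s) {x : X} (hx : x ∈ dom val a) :
    𝓑.theta val θa s x = θa a x := by
  have h : ∃ a ∈ 𝓑.fib s, x ∈ dom val a := ⟨a, ha, hx⟩
  rw [theta, dif_pos h]
  exact hθ.apply_eq_apply hv h.choose_spec.1 ha h.choose_spec.2 hx

end Fibers

namespace IsGelfandTransform

variable {𝓑 : FellBundle S A} {X : Type*} [TopologicalSpace X] {val : A → X → ℂ}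
  {e s t : S} {a b : A}

/-- Positivity of `val` on fibers over idempotents is transferred from the order of `A`:
a positive element of a C⋆-subalgebra is `w⋆ w` for some `w` in the subalgebra. -/
theorem re_val_star_mul_mul_le (hv : 𝓑.IsGelfandTransform val) {p : A}
    (he : IsIdempotentElem e) (hp : p ∈ 𝓑.fib e) (hps : IsSelfAdjoint p) (hb : b ∈ 𝓑.fib t)
    (x : X) : (val (star b * p * b) x).re ≤ ‖p‖ * (val (star b * b) x).re := by
  let _ : CStarAlgebra A := {}
  let _ := CStarAlgebra.spectralOrder A
  have _ := CStarAlgebra.spectralOrderedRing A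
  have ht := isIdempotentElem_star_mul_self t
  have hbb : (‖p‖ : ℂ) • (star b * b) ∈ 𝓑.fib (star t * t) :=
    Submodule.smul_mem _ _ (𝓑.star_mul_self_mem hb)
  have hbpb : star b * p * b ∈ 𝓑.fib (star t * t) := by
    rw [mul_assoc]
    exact 𝓑.mul_mem (𝓑.star_mem hb) (𝓑.mul_mem_of_isIdempotentElem_left he hp hb)
  have hle := sub_nonneg.2 (CStarAlgebra.star_left_conjugate_le_norm_smul (a := b) hps)
  rw [← Complex.coe_smul] at hle
  obtain ⟨w, hw, hweq⟩ := NonUnitalStarSubalgebra.exists_eq_star_mul_self_of_nonneg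
    (s := 𝓑.fibSubalgebra ht) (𝓑.isClosed_fib _) hle (Submodule.sub_mem _ hbb hbpb)
  have hsplit := hv.map_add ht (Submodule.sub_mem _ hbb hbpb) hbpb x
  rw [sub_add_cancel, hv.map_smul _ ht (𝓑.star_mul_self_mem hb), hweq] at hsplit
  have hw0 := (hv.star_mul_self hw x).2
  have hre := congrArg Complex.re hsplit
  simp only [Complex.add_re, Complex.mul_re, Complex.ofReal_re, Complex.ofReal_im, zero_mul,
    sub_zero] at hre
  linarith

theorem norm_val_le (hv : 𝓑.IsGelfandTransform val) (he : IsIdempotentElem e)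
    (hb : b ∈ 𝓑.fib e) (x : X) : ‖val b x‖ ≤ ‖b‖ := by
  have hb' := 𝓑.star_mem_of_isIdempotentElem he hb
  have h := hv.re_val_star_mul_mul_le he (𝓑.mul_mem_of_isIdempotentElem he hb hb')
    (.mul_star_self b) hb x
  rw [show star b * (b * star b) * b = (star b * b) * (star b * b) by simp only [mul_assoc],
    hv.map_mul he he (𝓑.mul_mem_of_isIdempotentElem he hb' hb)
      (𝓑.mul_mem_of_isIdempotentElem he hb' hb),
    hv.val_star_mul_self_of_isIdempotentElem he hb, CStarRing.norm_self_mul_star,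
    ← Complex.ofReal_mul, Complex.ofReal_re, Complex.ofReal_re] at h
  by_contra! hlt
  nlinarith [norm_nonneg b, mul_lt_mul'' hlt hlt (norm_nonneg b) (norm_nonneg b)]

theorem val_mul_eq_zero (hv : 𝓑.IsGelfandTransform val) {c : A} {r : S}
    (hrs : IsIdempotentElem (r * s)) (hc : c ∈ 𝓑.fib r) (ha : a ∈ 𝓑.fib s) {x : X}
    (hx : x ∉ dom val a) : val (c * a) x = 0 := by
  have h := hv.re_val_star_mul_mul_le (isIdempotentElem_star_mul_self r)
    (𝓑.star_mul_self_mem hc) (.star_mul_self c) ha x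
  rw [hv.re_val_star_mul_self_eq_zero ha hx, mul_zero, ← star_mul_self_mul,
    hv.val_star_mul_self_of_isIdempotentElem hrs (𝓑.mul_mem hc ha), Complex.ofReal_re] at h
  exact norm_eq_zero.1 (pow_eq_zero_iff two_ne_zero |>.1 (le_antisymm h (sq_nonneg _)))

theorem exists_mem_dom (hv : 𝓑.IsGelfandTransform val) (hsat : 𝓑.Saturated) {x : X}
    (hx : x ∈ 𝓑.U val (star s * s)) : ∃ a ∈ 𝓑.fib s, x ∈ dom val a := by
  obtain ⟨b, hb, hbx⟩ := hx
  by_contra! h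
  have hs := isIdempotentElem_star_mul_self s
  refine hbx (eq_zero_of_mem_closure_span (𝓑.isClosed_fib _)
    (fun c hc d hd => hv.map_add hs hc hd x) (fun z c hc => hv.map_smul z hs hc x) (C := 1)
    (fun c hc => by simpa using hv.norm_val_le hs hc x) ?_ ?_ (hsat (star s) s hb))
  · rintro _ ⟨c, hc, a, ha, rfl⟩
    exact 𝓑.mul_mem hc ha
  · rintro _ ⟨c, hc, a, ha, rfl⟩
    exact hv.val_mul_eq_zero hs hc ha (h a ha)

theorem exists_mul_mem_dom (hv : 𝓑.IsGelfandTransform val) (hsat : 𝓑.Saturated) {x : X}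
    (hx : x ∈ 𝓑.U val (star (s * t) * (s * t))) :
    ∃ a ∈ 𝓑.fib s, ∃ b ∈ 𝓑.fib t, x ∈ dom val (a * b) := by
  obtain ⟨d, hd, hxd⟩ := hv.exists_mem_dom hsat hx
  by_contra! h
  have he := isIdempotentElem_star_mul_self (s * t)
  have hmem {c : A} (hc : c ∈ 𝓑.fib (s * t)) := 𝓑.mul_mem (𝓑.star_mem hd) hc
  refine val_star_mul_self_ne_zero hxd (eq_zero_of_mem_closure_span
    (φ := fun c => val (star d * c) x) (𝓑.isClosed_fib _)
    (fun c hc c' hc' => by simpa only [mul_add] using hv.map_add he (hmem hc) (hmem hc') x)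
    (fun z c hc => by simpa only [mul_smul_comm] using hv.map_smul z he (hmem hc) x) (C := ‖d‖)
    (fun c hc => (hv.norm_val_le he (hmem hc) x).trans
      ((norm_mul_le _ _).trans_eq (by rw [norm_star])))
    ?_ ?_ (hsat s t hd))
  · rintro _ ⟨a, ha, b, hb, rfl⟩
    exact 𝓑.mul_mem ha hb
  · rintro _ ⟨a, ha, b, hb, rfl⟩
    exact hv.val_mul_eq_zero he (𝓑.star_mem hd) (𝓑.mul_mem ha hb) (h a ha b hb)

theorem mem_dom_mul_iff (hv : 𝓑.IsGelfandTransform val) {θa : A → X → X}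
    (hθ : 𝓑.IsConjugationFamily val θa) (ha : a ∈ 𝓑.fib s) (hb : b ∈ 𝓑.fib t) {x : X} :
    x ∈ dom val (a * b) ↔ x ∈ dom val b ∧ θa b x ∈ dom val a := by
  refine ⟨fun hx => ?_, fun ⟨hxb, hya⟩ => hθ.mem_dom_mul hv ha hb hxb hya⟩
  have hxb : x ∈ dom val b := by
    by_contra hxb
    have h := hv.re_val_star_mul_mul_le (isIdempotentElem_star_mul_self s)
      (𝓑.star_mul_self_mem ha) (.star_mul_self a) hb x
    rw [hv.re_val_star_mul_self_eq_zero hb hxb, mul_zero, ← star_mul_self_mul] at h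
    exact not_lt.2 h hx
  refine ⟨hxb, show 0 < (val (star a * a) (θa b x)).re from (pos_iff_pos_of_mul_pos ?_).1 hxb⟩
  rw [← hv.val_star_mul_self_mul hθ ha hb hxb]
  exact hx

end IsGelfandTransform

variable {𝓑 : FellBundle S A} {X : Type*} [TopologicalSpace X] {val : A → X → ℂ}
  {θa : A → X → X} {s t : S}

theorem mapsTo_theta (hv : 𝓑.IsGelfandTransform val) (hsat : 𝓑.Saturated)
    (hθ : 𝓑.IsConjugationFamily val θa) (s : S) :
    Set.MapsTo (𝓑.theta val θa s) (𝓑.U val (star s * s)) (𝓑.U val (s * star s)) := fun x hx => by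
  obtain ⟨a, ha, hxa⟩ := hv.exists_mem_dom hsat hx
  rw [theta_eq hθ hv ha hxa]
  simpa only [star_star] using 𝓑.mem_U_of_mem_dom (𝓑.star_mem ha) (hθ.mem_dom_star ha hxa)

theorem leftInvOn_theta (hv : 𝓑.IsGelfandTransform val) (hsat : 𝓑.Saturated)
    (hθ : 𝓑.IsConjugationFamily val θa) (s : S) :
    Set.LeftInvOn (𝓑.theta val θa (star s)) (𝓑.theta val θa s) (𝓑.U val (star s * s)) :=
  fun x hx => by
  obtain ⟨a, ha, hxa⟩ := hv.exists_mem_dom hsat hx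
  rw [theta_eq hθ hv ha hxa, theta_eq hθ hv (𝓑.star_mem ha) (hθ.mem_dom_star ha hxa)]
  exact (hθ.inv ha x hxa).2

theorem continuousOn_theta (hv : 𝓑.IsGelfandTransform val) (hsat : 𝓑.Saturated)
    (hθ : 𝓑.IsConjugationFamily val θa) (s : S) :
    ContinuousOn (𝓑.theta val θa s) (𝓑.U val (star s * s)) := fun x hx => by
  obtain ⟨a, ha, hxa⟩ := hv.exists_mem_dom hsat hx
  have hnhds := (hv.isOpen_dom ha).mem_nhds hxa
  refine (((hθ.continuousOn ha).continuousAt hnhds).congr ?_).continuousWithinAt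
  filter_upwards [hnhds] with y hy using (theta_eq hθ hv ha hy).symm

noncomputable def thetaPartialHomeomorph (hv : 𝓑.IsGelfandTransform val)
    (hsat : 𝓑.Saturated) (hθ : 𝓑.IsConjugationFamily val θa) (s : S) :
    OpenPartialHomeomorph X X where
  toFun := 𝓑.theta val θa s
  invFun := 𝓑.theta val θa (star s)
  source := 𝓑.U val (star s * s)
  target := 𝓑.U val (s * star s)
  map_source' := mapsTo_theta hv hsat hθ s
  map_target' := by
    have h := mapsTo_theta hv hsat hθ (star s)
    rwa [star_star] at h
  left_inv' := leftInvOn_theta hv hsat hθ s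
  right_inv' := by
    have h := leftInvOn_theta hv hsat hθ (star s)
    rwa [star_star] at h
  open_source := hv.isOpen_U (isIdempotentElem_star_mul_self s)
  open_target := hv.isOpen_U (isIdempotentElem_mul_star_self s)
  continuousOn_toFun := continuousOn_theta hv hsat hθ s
  continuousOn_invFun := by simpa only [star_star] using continuousOn_theta hv hsat hθ (star s)

theorem trans_thetaPartialHomeomorph_source (hv : 𝓑.IsGelfandTransform val)
    (hsat : 𝓑.Saturated) (hθ : 𝓑.IsConjugationFamily val θa) (s t : S) :
    ((thetaPartialHomeomorph hv hsat hθ t).trans (thetaPartialHomeomorph hv hsat hθ s)).source =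
      (thetaPartialHomeomorph hv hsat hθ (s * t)).source := by
  ext x
  simp only [OpenPartialHomeomorph.trans_source, Set.mem_inter_iff, Set.mem_preimage]
  constructor
  · rintro ⟨hxt, hxs⟩
    obtain ⟨b, hb, hxb⟩ := hv.exists_mem_dom hsat hxt
    change 𝓑.theta val θa t x ∈ _ at hxs
    rw [theta_eq hθ hv hb hxb] at hxs
    obtain ⟨a, ha, hya⟩ := hv.exists_mem_dom hsat hxs
    exact 𝓑.mem_U_of_mem_dom (𝓑.mul_mem ha hb) (hθ.mem_dom_mul hv ha hb hxb hya)
  · intro hx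
    obtain ⟨a, ha, b, hb, hxab⟩ := hv.exists_mul_mem_dom hsat hx
    obtain ⟨hxb, hya⟩ := (hv.mem_dom_mul_iff hθ ha hb).1 hxab
    refine ⟨𝓑.mem_U_of_mem_dom hb hxb, ?_⟩
    change 𝓑.theta val θa t x ∈ _
    rw [theta_eq hθ hv hb hxb]
    exact 𝓑.mem_U_of_mem_dom ha hya

theorem trans_thetaPartialHomeomorph_apply (hv : 𝓑.IsGelfandTransform val)
    (hsat : 𝓑.Saturated) (hθ : 𝓑.IsConjugationFamily val θa) (s t : S) {x : X}
    (hx : x ∈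
      ((thetaPartialHomeomorph hv hsat hθ t).trans (thetaPartialHomeomorph hv hsat hθ s)).source) :
    ((thetaPartialHomeomorph hv hsat hθ t).trans (thetaPartialHomeomorph hv hsat hθ s)) x =
      thetaPartialHomeomorph hv hsat hθ (s * t) x := by
  rw [trans_thetaPartialHomeomorph_source] at hx
  obtain ⟨a, ha, b, hb, hxab⟩ := hv.exists_mul_mem_dom hsat hx
  obtain ⟨hxb, hya⟩ := (hv.mem_dom_mul_iff hθ ha hb).1 hxab
  change 𝓑.theta val θa s (𝓑.theta val θa t x) = 𝓑.theta val θa (s * t) x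
  rw [theta_eq hθ hv hb hxb, theta_eq hθ hv ha hya, theta_eq hθ hv (𝓑.mul_mem ha hb) hxab,
    hθ.apply_mul hv ha hb hxb hya]

end FellBundle

theorem stmt_8_general (𝓑 : FellBundle S A) (hsat : 𝓑.Saturated)
    {X : Type*} [TopologicalSpace X] (val : A → X → ℂ)
    (hval_add : ∀ {e : S} {a b : A}, e * e = e → a ∈ 𝓑.fib e → b ∈ 𝓑.fib e →
      ∀ x, val (a + b) x = val a x + val b x)
    (hval_smul : ∀ {e : S} {a : A} (c : ℂ), e * e = e → a ∈ 𝓑.fib e →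
      ∀ x, val (c • a) x = c * val a x)
    (hval_mul : ∀ {e f : S} {a b : A}, e * e = e → f * f = f → a ∈ 𝓑.fib e → b ∈ 𝓑.fib f →
      ∀ x, val (a * b) x = val a x * val b x)
    (hval_star : ∀ {e : S} {a : A}, e * e = e → a ∈ 𝓑.fib e →
      ∀ x, val (star a) x = (starRingEnd ℂ) (val a x))
    (hval_inj : ∀ {e : S} {a b : A}, e * e = e → a ∈ 𝓑.fib e → b ∈ 𝓑.fib e →
      (∀ x, val a x = val b x) → a = b)
    (hval_sep : ∀ x y : X,
      (∀ (e : S) (b : A), e * e = e → b ∈ 𝓑.fib e → val b x = val b y) → x = y)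
    (hval_pos : ∀ {s : S} {a : A}, a ∈ 𝓑.fib s →
      ∀ x, (val (star a * a) x).im = 0 ∧ 0 ≤ (val (star a * a) x).re)
    (hval_cont : ∀ {e : S} {b : A}, e * e = e → b ∈ 𝓑.fib e → Continuous (val b))
    -- the partial maps `θₐ` of Lemma 3.3, together with their defining property and the
    -- fact that each is a homeomorphism of `dom a` onto `ran a`:
    (θa : A → X → X)
    (hθa : ∀ {s : S} {a : A}, a ∈ 𝓑.fib s → ∀ x : X, 0 < (val (star a * a) x).re →
      ∀ {e : S} {b : A}, e * e = e → b ∈ 𝓑.fib e →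
        val (star a * b * a) x = val (star a * a) x * val b (θa a x))
    (hθa_cont : ∀ {s : S} {a : A}, a ∈ 𝓑.fib s →
      ContinuousOn (θa a) {x : X | 0 < (val (star a * a) x).re})
    (hθa_inv : ∀ {s : S} {a : A}, a ∈ 𝓑.fib s → ∀ x : X, 0 < (val (star a * a) x).re →
      0 < (val (a * star a) (θa a x)).re ∧ θa (star a) (θa a x) = x) :
    ∃ θ : S → OpenPartialHomeomorph X X,
      ((∀ s : S, (θ s).source = 𝓑.U val (star s * s) ∧ (θ s).target = 𝓑.U val (s * star s)) ∧
       (∀ (s : S) (a : A), a ∈ 𝓑.fib s → ∀ x : X, 0 < (val (star a * a) x).re →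
          θ s x = θa a x) ∧
       (∀ s t : S, ((θ t).trans (θ s)).source = (θ (s * t)).source ∧
          ∀ x ∈ ((θ t).trans (θ s)).source, ((θ t).trans (θ s)) x = θ (s * t) x)) ∧
      -- uniqueness: any other family with the same source/target and the same
      -- restriction property agrees with `θ` as partial maps
      (∀ θ' : S → OpenPartialHomeomorph X X,
        (∀ s : S, (θ' s).source = 𝓑.U val (star s * s) ∧
            (θ' s).target = 𝓑.U val (s * star s)) →
        (∀ (s : S) (a : A), a ∈ 𝓑.fib s → ∀ x : X, 0 < (val (star a * a) x).re →
            θ' s x = θa a x) →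
        ∀ s : S, Set.EqOn (θ' s) (θ s) ((θ s).source)) := by
  have hv : 𝓑.IsGelfandTransform val :=
    ⟨hval_add, hval_smul, hval_mul, hval_star, hval_inj, hval_sep, hval_pos, hval_cont⟩
  have hθ : 𝓑.IsConjugationFamily val θa := ⟨hθa, hθa_cont, hθa_inv⟩
  refine ⟨FellBundle.thetaPartialHomeomorph hv hsat hθ,
    ⟨fun s => ⟨rfl, rfl⟩, fun s a ha x hx => FellBundle.theta_eq hθ hv ha hx, fun s t =>
      ⟨FellBundle.trans_thetaPartialHomeomorph_source hv hsat hθ s t,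
        fun x hx => FellBundle.trans_thetaPartialHomeomorph_apply hv hsat hθ s t hx⟩⟩, ?_⟩
  intro θ' _ hθ' s x hx
  obtain ⟨a, ha, hxa⟩ := hv.exists_mem_dom hsat hx
  exact (hθ' s a ha x hxa).trans (FellBundle.theta_eq hθ hv ha hxa).symm

/-- Let `𝓑` be a saturated semi-abelian Fell bundle over `S`, with
spectrum `X` of `C*(𝓔)` (identified via the Gelfand transform `val`) and `𝒜ₑ ≅ C₀(𝒰ₑ)`.
Then for each `s ∈ S` there is a unique (partial) homeomorphism
`θₛ : 𝒰_{s*s} → 𝒰_{ss*}` whose restriction to `dom a` equals `θₐ` for each `a ∈ 𝒜ₛ`,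
and `θₛ ∘ θₜ = θ_{st}` (as partial maps, with coinciding domains); i.e. `θ` is an action
of `S` on `X` by partial homeomorphisms. -/
theorem stmt_8 (𝓑 : FellBundle S A) (hsat : 𝓑.Saturated) (hsab : 𝓑.SemiAbelian)
    {X : Type*} [TopologicalSpace X] (val : A → X → ℂ)
    (hval_add : ∀ {e : S} {a b : A}, e * e = e → a ∈ 𝓑.fib e → b ∈ 𝓑.fib e →
      ∀ x, val (a + b) x = val a x + val b x)
    (hval_smul : ∀ {e : S} {a : A} (c : ℂ), e * e = e → a ∈ 𝓑.fib e →
      ∀ x, val (c • a) x = c * val a x)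
    (hval_mul : ∀ {e f : S} {a b : A}, e * e = e → f * f = f → a ∈ 𝓑.fib e → b ∈ 𝓑.fib f →
      ∀ x, val (a * b) x = val a x * val b x)
    (hval_star : ∀ {e : S} {a : A}, e * e = e → a ∈ 𝓑.fib e →
      ∀ x, val (star a) x = (starRingEnd ℂ) (val a x))
    (hval_inj : ∀ {e : S} {a b : A}, e * e = e → a ∈ 𝓑.fib e → b ∈ 𝓑.fib e →
      (∀ x, val a x = val b x) → a = b)
    (hval_sep : ∀ x y : X,
      (∀ (e : S) (b : A), e * e = e → b ∈ 𝓑.fib e → val b x = val b y) → x = y)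
    (hval_pos : ∀ {s : S} {a : A}, a ∈ 𝓑.fib s →
      ∀ x, (val (star a * a) x).im = 0 ∧ 0 ≤ (val (star a * a) x).re)
    (hval_cont : ∀ {e : S} {b : A}, e * e = e → b ∈ 𝓑.fib e → Continuous (val b))
    -- the partial maps `θₐ` of Lemma 3.3, together with their defining property and the
    -- fact that each is a homeomorphism of `dom a` onto `ran a`:
    (θa : A → X → X)
    (hθa : ∀ {s : S} {a : A}, a ∈ 𝓑.fib s → ∀ x : X, 0 < (val (star a * a) x).re →
      ∀ {e : S} {b : A}, e * e = e → b ∈ 𝓑.fib e →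
        val (star a * b * a) x = val (star a * a) x * val b (θa a x))
    (hθa_cont : ∀ {s : S} {a : A}, a ∈ 𝓑.fib s →
      ContinuousOn (θa a) {x : X | 0 < (val (star a * a) x).re})
    (hθa_inv : ∀ {s : S} {a : A}, a ∈ 𝓑.fib s → ∀ x : X, 0 < (val (star a * a) x).re →
      0 < (val (a * star a) (θa a x)).re ∧ θa (star a) (θa a x) = x) :
    ∃ θ : S → OpenPartialHomeomorph X X,
      ((∀ s : S, (θ s).source = 𝓑.U val (star s * s) ∧ (θ s).target = 𝓑.U val (s * star s)) ∧
       (∀ (s : S) (a : A), a ∈ 𝓑.fib s → ∀ x : X, 0 < (val (star a * a) x).re →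
          θ s x = θa a x) ∧
       (∀ s t : S, ((θ t).trans (θ s)).source = (θ (s * t)).source ∧
          ∀ x ∈ ((θ t).trans (θ s)).source, ((θ t).trans (θ s)) x = θ (s * t) x)) ∧
      -- uniqueness: any other family with the same source/target and the same
      -- restriction property agrees with `θ` as partial maps
      (∀ θ' : S → OpenPartialHomeomorph X X,
        (∀ s : S, (θ' s).source = 𝓑.U val (star s * s) ∧
            (θ' s).target = 𝓑.U val (s * star s)) →
        (∀ (s : S) (a : A), a ∈ 𝓑.fib s → ∀ x : X, 0 < (val (star a * a) x).re →
            θ' s x = θa a x) →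
        ∀ s : S, Set.EqOn (θ' s) (θ s) ((θ s).source)) :=
  stmt_8_general 𝓑 hsat val hval_add hval_smul hval_mul hval_star hval_inj hval_sep hval_pos
    hval_cont θa hθa hθa_cont hθa_inv
end
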